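/- Let V be a real inner product space of dimension 3, let N be a unit vector, T a unit vector, and let E1, E2 be a basis of a 2-dimensional subspace P orthogonal to N. Set v := ⟨T,E1⟩E2 − ⟨T,E2⟩E1 and let G(E1,E2) := ⟨E1,E1⟩⟨E2,E2⟩ − ⟨E1,E2⟩² be the Gram determinant. Then the norm of the projection of N onto the orthogonal complement of T satisfies |N − ⟨N,T⟩T| = |v| / G(E1,E2)^{1/2}. -/

import Mathlib

open scoped RealInnerProductSpace

/-!
Write `c = ⟪N, T⟫`. Both `N - c • T` and `t = T - c • N` have squared norm `1 - c²`. In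
dimension three the plane spanned by `E1, E2` is `Nᗮ`, so `t` lies in it, and `v` is unchanged
when `T` is replaced by `t`. For vectors `t` of the plane, `v` is `t` turned by a right angle
inside the plane and scaled by `√G(E1, E2)`, so `‖v‖² = G(E1, E2) ‖t‖²`.
-/

open Module Submodule

theorem span_range_eq_orthogonal_singleton {𝕜 V ι : Type*} [RCLike 𝕜] [NormedAddCommGroup V]
    [InnerProductSpace 𝕜 V] [Fintype ι] {v : ι → V} {n : V} (hv : LinearIndependent 𝕜 v)
    (hn : n ≠ 0) (horth : ∀ i, inner 𝕜 n (v i) = 0) (hdim : finrank 𝕜 V = Fintype.card ι + 1) :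
    span 𝕜 (Set.range v) = (𝕜 ∙ n)ᗮ := by
  have : FiniteDimensional 𝕜 V := .of_finrank_pos (by omega)
  refine eq_of_le_of_finrank_eq ?_ ?_
  · rw [span_le]
    rintro _ ⟨i, rfl⟩
    exact mem_orthogonal_singleton_iff_inner_right.mpr (horth i)
  · have := finrank_add_finrank_orthogonal (𝕜 ∙ n)
    rw [finrank_span_singleton hn] at this
    rw [finrank_span_eq_card hv]
    omega

section Real

variable {V : Type*} [NormedAddCommGroup V] [InnerProductSpace ℝ V]

theorem Matrix.det_gram_fin_two (x y : V) :
    (Matrix.gram ℝ ![x, y]).det = ⟪x, x⟫ * ⟪y, y⟫ - ⟪x, y⟫ ^ 2 := by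
  simp [Matrix.det_fin_two, sq, real_inner_comm x y]

theorem inner_self_mul_inner_self_sub_sq_pos {x y : V} (h : LinearIndependent ℝ ![x, y]) :
    0 < ⟪x, x⟫ * ⟪y, y⟫ - ⟪x, y⟫ ^ 2 :=
  Matrix.det_gram_fin_two x y ▸ (Matrix.posDef_gram_of_linearIndependent h).det_pos

theorem norm_sub_inner_smul_sq (x : V) {u : V} (hu : ‖u‖ = 1) :
    ‖x - ⟪x, u⟫ • u‖ ^ 2 = ‖x‖ ^ 2 - ⟪x, u⟫ ^ 2 := by
  rw [norm_sub_sq_real, real_inner_smul_right, norm_smul, hu, Real.norm_eq_abs]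
  ring_nf
  rw [sq_abs]
  ring

theorem norm_inner_smul_sub_inner_smul_sq_of_mem_span_pair {x y t : V}
    (ht : t ∈ span ℝ {x, y}) :
    ‖⟪t, x⟫ • y - ⟪t, y⟫ • x‖ ^ 2 = (⟪x, x⟫ * ⟪y, y⟫ - ⟪x, y⟫ ^ 2) * ‖t‖ ^ 2 := by
  obtain ⟨a, b, rfl⟩ := mem_span_pair.mp ht
  simp only [← real_inner_self_eq_norm_sq, inner_add_left, inner_add_right, inner_sub_left,
    inner_sub_right, real_inner_smul_left, real_inner_smul_right, real_inner_comm x y]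
  ring

end Real

/-- Horizontal Jacobian lemma (Lemma 3.2): in a 3-dimensional real inner product
space, with `N` a unit vector orthogonal to the plane spanned by `E1, E2`, and `T`
a unit vector, the norm of the projection of `N` orthogonal to `T` equals
`|⟨T,E1⟩E2 − ⟨T,E2⟩E1| / √G(E1,E2)`. -/
theorem horizontal_jacobian {V : Type*} [NormedAddCommGroup V] [InnerProductSpace ℝ V]
    (hdim : Module.finrank ℝ V = 3)
    (N T E1 E2 : V) (hN : ‖N‖ = 1) (hT : ‖T‖ = 1)
    (hind : LinearIndependent ℝ ![E1, E2])
    (h1 : ⟪N, E1⟫ = 0) (h2 : ⟪N, E2⟫ = 0) :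
    ‖N - ⟪N, T⟫ • T‖ =
      ‖⟪T, E1⟫ • E2 - ⟪T, E2⟫ • E1‖ /
        Real.sqrt (⟪E1, E1⟫ * ⟪E2, E2⟫ - ⟪E1, E2⟫ ^ 2) := by
  have hG := inner_self_mul_inner_self_sub_sq_pos hind
  have hplane : span ℝ {E1, E2} = (ℝ ∙ N)ᗮ := by
    rw [← Matrix.range_cons_cons_empty E1 E2 ![]]
    exact span_range_eq_orthogonal_singleton hind (norm_ne_zero_iff.mp (hN ▸ one_ne_zero))
      (Fin.forall_fin_two.mpr ⟨h1, h2⟩) (by simp [hdim])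
  set t := T - ⟪T, N⟫ • N
  have ht : t ∈ span ℝ {E1, E2} := by
    rw [hplane, mem_orthogonal_singleton_iff_inner_right, inner_sub_right, real_inner_smul_right,
      real_inner_self_eq_norm_sq, hN, real_inner_comm]
    ring
  have htE : ∀ {E}, ⟪N, E⟫ = 0 → ⟪t, E⟫ = ⟪T, E⟫ := fun hE => by
    rw [inner_sub_left, real_inner_smul_left, real_inner_comm, hE, mul_zero, sub_zero]
  have hsq : ‖⟪T, E1⟫ • E2 - ⟪T, E2⟫ • E1‖ ^ 2 =
      (⟪E1, E1⟫ * ⟪E2, E2⟫ - ⟪E1, E2⟫ ^ 2) * ‖N - ⟪N, T⟫ • T‖ ^ 2 := by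
    rw [← htE h1, ← htE h2, norm_inner_smul_sub_inner_smul_sq_of_mem_span_pair ht,
      norm_sub_inner_smul_sq _ hN, norm_sub_inner_smul_sq _ hT, hN, hT, real_inner_comm T N]
  rw [eq_div_iff (Real.sqrt_pos.mpr hG).ne',
    ← Real.sqrt_sq (norm_nonneg (⟪T, E1⟫ • E2 - ⟪T, E2⟫ • E1)), hsq, Real.sqrt_mul hG.le,
    Real.sqrt_sq (norm_nonneg _), mul_comm]
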